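/- Lasso oracle inequality: Under the event (4/(nh))|G'e|_∞ ≤ λ and the compatibility condition — namely, for all δ with |δ_{S^c}|₁ ≤ 3|δ_S|₁ one has |δ_S|₁² ≤ (s/φ²)·(δ'Mδ) where M = (1/(nh))G'G and s = |S| — any Lasso minimizer θ̂ satisfies (1/(nh))|G(θ̂-θ*)|₂² + λ|θ̂-θ*|₁ ≤ 4λ² s/φ², and in particular |θ̂ - θ*|₁ ≤ 4λ s/φ². -/

import Mathlib

noncomputable section
open Matrix BigOperators Finset

def l1 {d : ℕ} (v : Fin d → ℝ) : ℝ := ∑ j, |v j|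

def sq2 {m : ℕ} (v : Fin m → ℝ) : ℝ := ∑ i, (v i) ^ 2

def linf {m : ℕ} (v : Fin m → ℝ) : ℝ := ⨆ i, |v i|

def restr {d : ℕ} (S : Finset (Fin d)) (v : Fin d → ℝ) : Fin d → ℝ :=
  fun j => if j ∈ S then v j else 0

/-! The usual Lasso argument. Comparing the objective at `θhat` and at `θstar` gives the basic
inequality; on the event the noise term costs at most half of the penalty, and since `θstar`
lives on `S`, the triangle inequality shows that the penalty drops by at most `|δ_S|₁` and grows
by exactly `|δ_{Sᶜ}|₁` along the error `δ = θhat - θstar`. This leaves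
`2‖Gδ‖²/(nh) + λ|δ|₁ ≤ 4λ|δ_S|₁`, which puts `δ` in the cone of the compatibility condition,
and then `4λ|δ_S|₁ ≤ 4λ √(s/φ² · ‖Gδ‖²/(nh)) ≤ ‖Gδ‖²/(nh) + 4λ²s/φ²`. -/

lemma l1_nonneg {d : ℕ} (v : Fin d → ℝ) : 0 ≤ l1 v :=
  sum_nonneg fun _ _ => abs_nonneg _

lemma sq2_nonneg {m : ℕ} (v : Fin m → ℝ) : 0 ≤ sq2 v :=
  sum_nonneg fun _ _ => sq_nonneg _

lemma l1_restr {d : ℕ} (S : Finset (Fin d)) (v : Fin d → ℝ) :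
    l1 (restr S v) = ∑ j ∈ S, |v j| := by
  simp [l1, restr, apply_ite abs, sum_ite_mem]

lemma l1_eq_l1_restr_add_l1_restr_compl {d : ℕ} (S : Finset (Fin d)) (v : Fin d → ℝ) :
    l1 v = l1 (restr S v) + l1 (restr Sᶜ v) := by
  rw [l1_restr, l1_restr, sum_add_sum_compl, l1]

lemma abs_le_linf {m : ℕ} (u : Fin m → ℝ) (i : Fin m) : |u i| ≤ linf u :=
  le_ciSup (Set.finite_range fun i => |u i|).bddAbove i

lemma dotProduct_le_linf_mul_l1 {m : ℕ} (u w : Fin m → ℝ) : u ⬝ᵥ w ≤ linf u * l1 w := by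
  rw [dotProduct, l1, mul_sum]
  refine sum_le_sum fun i _ => ?_
  calc u i * w i ≤ |u i| * |w i| := (le_abs_self _).trans (abs_mul _ _).le
    _ ≤ linf u * |w i| := mul_le_mul_of_nonneg_right (abs_le_linf u i) (abs_nonneg _)

lemma dotProduct_smul_gram_mulVec {n d : ℕ} (c : ℝ) (G : Matrix (Fin n) (Fin d) ℝ)
    (δ : Fin d → ℝ) : δ ⬝ᵥ (c • (Gᵀ * G)) *ᵥ δ = c * sq2 (G *ᵥ δ) := by
  rw [smul_mulVec, dotProduct_smul, ← mulVec_mulVec, dotProduct_mulVec, vecMul_transpose]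
  simp [dotProduct, sq2, sq]

lemma sq2_sub {m : ℕ} (a b : Fin m → ℝ) : sq2 (a - b) = sq2 a - 2 * (a ⬝ᵥ b) + sq2 b := by
  simp only [sq2, dotProduct, Pi.sub_apply, mul_sum, ← sum_sub_distrib, ← sum_add_distrib]
  exact sum_congr rfl fun i _ => by ring

lemma l1_sub_l1_le_of_support {d : ℕ} {S : Finset (Fin d)} {θ : Fin d → ℝ}
    (hθ : ∀ j ∉ S, θ j = 0) (θ' : Fin d → ℝ) :
    l1 θ - l1 θ' ≤ l1 (restr S (θ' - θ)) - l1 (restr Sᶜ (θ' - θ)) := by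
  rw [l1_eq_l1_restr_add_l1_restr_compl S θ, l1_eq_l1_restr_add_l1_restr_compl S θ']
  simp only [l1_restr]
  have hS : ∑ j ∈ S, |θ j| - ∑ j ∈ S, |θ' j| ≤ ∑ j ∈ S, |(θ' - θ) j| := by
    rw [← sum_sub_distrib]
    exact sum_le_sum fun j _ => by
      simpa [abs_sub_comm] using abs_sub_abs_le_abs_sub (θ j) (θ' j)
  have hSc : ∑ j ∈ Sᶜ, |θ' j| = ∑ j ∈ Sᶜ, |(θ' - θ) j| :=
    sum_congr rfl fun j hj => by simp [hθ j (mem_compl.mp hj)]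
  have hSc₀ : ∑ j ∈ Sᶜ, |θ j| = 0 :=
    sum_eq_zero fun j hj => by simp [hθ j (mem_compl.mp hj)]
  linarith

section Lasso

variable {n d : ℕ} {κ lam : ℝ} {G : Matrix (Fin n) (Fin d) ℝ} {Y e : Fin n → ℝ}
  {θstar θhat : Fin d → ℝ}

lemma lasso_basic_inequality (he : e = Y - G *ᵥ θstar)
    (hmin : κ * sq2 (Y - G *ᵥ θhat) + lam * l1 θhat ≤ κ * sq2 (Y - G *ᵥ θstar) + lam * l1 θstar) :
    κ * sq2 (G *ᵥ (θhat - θstar)) + lam * l1 θhat ≤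
      κ * (2 * ((Gᵀ *ᵥ e) ⬝ᵥ (θhat - θstar))) + lam * l1 θstar := by
  have hres : Y - G *ᵥ θhat = e - G *ᵥ (θhat - θstar) := by
    rw [he, mulVec_sub]; abel
  rw [hres, ← he, sq2_sub, dotProduct_mulVec, ← mulVec_transpose] at hmin
  linarith

lemma lasso_noise_term_le (hκ : 0 ≤ κ) (hevent : 4 * κ * linf (Gᵀ *ᵥ e) ≤ lam) (δ : Fin d → ℝ) :
    κ * (2 * ((Gᵀ *ᵥ e) ⬝ᵥ δ)) ≤ lam / 2 * l1 δ := by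
  have := mul_le_mul_of_nonneg_left (dotProduct_le_linf_mul_l1 (Gᵀ *ᵥ e) δ) hκ
  nlinarith [mul_le_mul_of_nonneg_right hevent (l1_nonneg δ)]

lemma lasso_error_le (hκ : 0 ≤ κ) (hlam : 0 ≤ lam) {S : Finset (Fin d)}
    (hS : ∀ j ∉ S, θstar j = 0)
    (he : e = Y - G *ᵥ θstar)
    (hmin : κ * sq2 (Y - G *ᵥ θhat) + lam * l1 θhat ≤ κ * sq2 (Y - G *ᵥ θstar) + lam * l1 θstar)
    (hevent : 4 * κ * linf (Gᵀ *ᵥ e) ≤ lam) :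
    2 * (κ * sq2 (G *ᵥ (θhat - θstar))) + lam * l1 (θhat - θstar) ≤
      4 * lam * l1 (restr S (θhat - θstar)) := by
  have hbasic := lasso_basic_inequality he hmin
  have hnoise := lasso_noise_term_le hκ hevent (θhat - θstar)
  have htri := l1_sub_l1_le_of_support hS θhat
  rw [l1_eq_l1_restr_add_l1_restr_compl S (θhat - θstar)] at hnoise ⊢
  nlinarith [mul_le_mul_of_nonneg_left htri hlam]

end Lasso

lemma four_mul_le_add_of_sq_le {a A c : ℝ} (hA : 0 ≤ A) (hc : 0 ≤ c) (h : a ^ 2 ≤ c * A)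
    (t : ℝ) : 4 * t * a ≤ A + 4 * t ^ 2 * c := by
  have hsq : (4 * t * a) ^ 2 ≤ (A + 4 * t ^ 2 * c) ^ 2 := by
    nlinarith [sq_nonneg (A - 4 * t ^ 2 * c), mul_le_mul_of_nonneg_left h (sq_nonneg (4 * t))]
  exact (abs_le_of_sq_le_sq' hsq (by positivity)).2

theorem stmt4_general {n d : ℕ} (h : ℝ) (hh : 0 < h)
    (lam φ : ℝ) (hlam : 0 < lam)
    (G : Matrix (Fin n) (Fin d) ℝ) (Y : Fin n → ℝ)
    (θstar θhat : Fin d → ℝ) (e : Fin n → ℝ) (he : e = Y - G.mulVec θstar)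
    (S : Finset (Fin d)) (hS : S = Finset.univ.filter (fun j => θstar j ≠ 0))
    (hmin : ∀ θ : Fin d → ℝ,
      (1 / (n * h)) * sq2 (Y - G.mulVec θhat) + lam * l1 θhat ≤
        (1 / (n * h)) * sq2 (Y - G.mulVec θ) + lam * l1 θ)
    (hevent : (4 / (n * h)) * linf (Gᵀ.mulVec e) ≤ lam)
    (hcompat : ∀ δ : Fin d → ℝ, l1 (restr Sᶜ δ) ≤ 3 * l1 (restr S δ) →
      (l1 (restr S δ)) ^ 2 ≤ ((S.card : ℝ) / φ ^ 2) *
        (δ ⬝ᵥ ((1 / (n * h)) • (Gᵀ * G)).mulVec δ)) :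
    (1 / (n * h)) * sq2 (G.mulVec (θhat - θstar)) + lam * l1 (θhat - θstar) ≤
        4 * lam ^ 2 * (S.card : ℝ) / φ ^ 2 ∧
      l1 (θhat - θstar) ≤ 4 * lam * (S.card : ℝ) / φ ^ 2 := by
  set κ : ℝ := 1 / (n * h)
  set δ := θhat - θstar
  have hκ : 0 ≤ κ := by positivity
  have hsupp : ∀ j ∉ S, θstar j = 0 := fun j hj => by simpa [hS] using hj
  have herror := lasso_error_le hκ hlam.le hsupp he (hmin θstar) (by rwa [mul_one_div])
  have hA : 0 ≤ κ * sq2 (G *ᵥ δ) := mul_nonneg hκ (sq2_nonneg _)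
  have hcone : l1 (restr Sᶜ δ) ≤ 3 * l1 (restr S δ) := by
    rw [l1_eq_l1_restr_add_l1_restr_compl S δ] at herror
    exact le_of_mul_le_mul_left (by linarith) hlam
  have hquad := hcompat δ hcone
  rw [dotProduct_smul_gram_mulVec] at hquad
  have hamgm := four_mul_le_add_of_sq_le hA (by positivity) hquad lam
  have hbound : κ * sq2 (G *ᵥ δ) + lam * l1 δ ≤ 4 * lam ^ 2 * (S.card / φ ^ 2) := by linarith
  refine ⟨by rwa [mul_div_assoc], le_of_mul_le_mul_left ?_ hlam⟩
  calc lam * l1 δ ≤ 4 * lam ^ 2 * (S.card / φ ^ 2) := by linarith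
    _ = lam * (4 * lam * S.card / φ ^ 2) := by ring

theorem stmt4 {n d : ℕ} (hn : 0 < n) (hd : 0 < d) (h : ℝ) (hh : 0 < h)
    (lam φ : ℝ) (hlam : 0 < lam) (hφ : 0 < φ)
    (G : Matrix (Fin n) (Fin d) ℝ) (Y : Fin n → ℝ)
    (θstar θhat : Fin d → ℝ) (e : Fin n → ℝ) (he : e = Y - G.mulVec θstar)
    (S : Finset (Fin d)) (hS : S = Finset.univ.filter (fun j => θstar j ≠ 0))
    (hmin : ∀ θ : Fin d → ℝ,
      (1 / (n * h)) * sq2 (Y - G.mulVec θhat) + lam * l1 θhat ≤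
        (1 / (n * h)) * sq2 (Y - G.mulVec θ) + lam * l1 θ)
    (hevent : (4 / (n * h)) * linf (Gᵀ.mulVec e) ≤ lam)
    (hcompat : ∀ δ : Fin d → ℝ, l1 (restr Sᶜ δ) ≤ 3 * l1 (restr S δ) →
      (l1 (restr S δ)) ^ 2 ≤ ((S.card : ℝ) / φ ^ 2) *
        (δ ⬝ᵥ ((1 / (n * h)) • (Gᵀ * G)).mulVec δ)) :
    (1 / (n * h)) * sq2 (G.mulVec (θhat - θstar)) + lam * l1 (θhat - θstar) ≤
        4 * lam ^ 2 * (S.card : ℝ) / φ ^ 2 ∧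
      l1 (θhat - θstar) ≤ 4 * lam * (S.card : ℝ) / φ ^ 2 :=
  stmt4_general h hh lam φ hlam G Y θstar θhat e he S hS hmin hevent hcompat
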